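/- arXiv:1109.2111 — 3 statements merged into one kernel-verified Lean document; each statement's English description precedes it below -/
import Mathlib

section
/- Let γ : ℝ → ℝ be smooth and positive on (a,b) with γ(r) ≤ d_b (b − r) for r ∈ (b − ε, b) for some d_b, ε > 0. Fix k₀ ∈ (a,b) and define u₊(k) = exp(∫_{k₀}^{k} (2 − γ'(r))/(2γ(r)) dr) for k ∈ (a,b). Then there is a constant c_ε > 0 such that u₊(k) ≥ c_ε (b − k)^{−1/2 − 1/d_b} for all k ∈ (b − ε, b); in particular u₊ is not square-integrable on (a,b). -/
open MeasureTheory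

/-- The deficiency solution `u₊(k) = exp(∫_{k₀}^k (2-γ')/(2γ))` blows up like
`(b-k)^{-1/2-1/d_b}` near the zero `b` of `γ`; in particular it is not square-integrable
on `(a,b)`. -/
theorem stmt_4 (γ : ℝ → ℝ) (hγ : ContDiff ℝ (⊤ : ℕ∞) γ) (a b : ℝ) (hab : a < b)
    (hpos : ∀ k ∈ Set.Ioo a b, 0 < γ k)
    (db ε : ℝ) (hdb : 0 < db) (hε : 0 < ε) (hεa : a < b - ε)
    (hlin : ∀ r ∈ Set.Ioo (b - ε) b, γ r ≤ db * (b - r))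
    (k₀ : ℝ) (hk₀ : k₀ ∈ Set.Ioo a b)
    (u : ℝ → ℝ)
    (hu : ∀ k ∈ Set.Ioo a b, u k = Real.exp (∫ r in k₀..k, (2 - deriv γ r) / (2 * γ r))) :
    ∃ cε > 0, (∀ k ∈ Set.Ioo (b - ε) b, cε * (b - k) ^ (-(1 / 2 : ℝ) - 1 / db) ≤ u k) ∧
      ¬ IntegrableOn (fun k => (u k) ^ 2) (Set.Ioo a b) := by
  have hγc : Continuous γ := hγ.continuous
  have hγ' : Continuous (deriv γ) := hγ.continuous_deriv (by simp)
  have hγd : Differentiable ℝ γ := hγ.differentiable (by simp)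
  set g : ℝ → ℝ := fun r => (γ r)⁻¹ with hg
  have hgcont : ContinuousOn g (Set.Ioo a b) :=
    hγc.continuousOn.inv₀ fun r hr => (hpos r hr).ne'
  -- interval integrability of g on subintervals of (a,b)
  have hgint : ∀ k ∈ Set.Ioo a b, IntervalIntegrable g volume k₀ k := by
    intro k hk
    have hsub : Set.uIcc k₀ k ⊆ Set.Ioo a b := Set.ordConnected_Ioo.uIcc_subset hk₀ hk
    exact (hgcont.mono hsub).intervalIntegrable
  -- key identity: u k = exp(∫ g) * γ(k₀)^{1/2} * γ(k)^{-1/2}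
  have key : ∀ k ∈ Set.Ioo a b,
      u k = Real.exp (∫ r in k₀..k, g r) * γ k₀ ^ ((1 : ℝ) / 2) * γ k ^ (-(1 / 2 : ℝ)) := by
    intro k hk
    have hsub : Set.uIcc k₀ k ⊆ Set.Ioo a b := Set.ordConnected_Ioo.uIcc_subset hk₀ hk
    have hgp : ∀ r ∈ Set.uIcc k₀ k, 0 < γ r := fun r hr => hpos r (hsub hr)
    have hcontq : ContinuousOn (fun r => deriv γ r / (2 * γ r)) (Set.uIcc k₀ k) :=
      hγ'.continuousOn.div (continuous_const.mul hγc).continuousOn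
        (fun r hr => by have := hgp r hr; positivity)
    have hint1 : IntervalIntegrable (fun r => deriv γ r / (2 * γ r)) volume k₀ k :=
      hcontq.intervalIntegrable
    have hgi : IntervalIntegrable g volume k₀ k := hgint k hk
    have hd : ∀ r ∈ Set.uIcc k₀ k,
        HasDerivAt (fun r => (1 / 2 : ℝ) * Real.log (γ r)) (deriv γ r / (2 * γ r)) r := by
      intro r hr
      have h1 : HasDerivAt γ (deriv γ r) r := (hγd r).hasDerivAt
      have h2 : HasDerivAt (fun r => Real.log (γ r)) ((γ r)⁻¹ * deriv γ r) r :=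
        (Real.hasDerivAt_log (hgp r hr).ne').comp r h1
      have h3 := h2.const_mul (1 / 2 : ℝ)
      refine h3.congr_deriv ?_
      have := (hgp r hr).ne'
      field_simp
    have hFTC : (∫ r in k₀..k, deriv γ r / (2 * γ r))
        = (1 / 2 : ℝ) * Real.log (γ k) - (1 / 2 : ℝ) * Real.log (γ k₀) :=
      intervalIntegral.integral_eq_sub_of_hasDerivAt hd hint1
    have heq2 : (∫ r in k₀..k, (2 - deriv γ r) / (2 * γ r))
        = (∫ r in k₀..k, g r) - ∫ r in k₀..k, deriv γ r / (2 * γ r) := by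
      rw [← intervalIntegral.integral_sub hgi hint1]
      apply intervalIntegral.integral_congr
      intro r hr
      have h0 := (hgp r hr).ne'
      simp only [hg]
      field_simp
    rw [hu k hk, heq2, hFTC,
      Real.rpow_def_of_pos (hpos k₀ hk₀), Real.rpow_def_of_pos (hpos k hk),
      ← Real.exp_add, ← Real.exp_add]
    congr 1
    ring
  -- the auxiliary monotone function G
  set G : ℝ → ℝ := fun k => (∫ r in k₀..k, g r) + (1 / db) * Real.log (b - k) with hG
  have hGderiv : ∀ k ∈ Set.Ico (b - ε) b,
      HasDerivAt G (g k - (1 / db) * (b - k)⁻¹) k := by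
    intro k hk
    have hkab : k ∈ Set.Ioo a b := ⟨lt_of_lt_of_le hεa hk.1, hk.2⟩
    have hbk : 0 < b - k := by linarith [hk.2]
    have h1 : HasDerivAt (fun k => ∫ r in k₀..k, g r) (g k) k :=
      intervalIntegral.integral_hasDerivAt_right (hgint k hkab)
        (hgcont.stronglyMeasurableAtFilter isOpen_Ioo k hkab)
        ((hgcont k hkab).continuousAt (isOpen_Ioo.mem_nhds hkab))
    have h2 : HasDerivAt (fun k : ℝ => b - k) (-1) k := by
      simpa using (hasDerivAt_id k).const_sub b
    have h3 : HasDerivAt (fun k => Real.log (b - k)) ((b - k)⁻¹ * (-1)) k :=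
      (Real.hasDerivAt_log hbk.ne').comp k h2
    have h4 := h1.add (h3.const_mul (1 / db : ℝ))
    refine h4.congr_deriv ?_
    ring
  have hGmono : MonotoneOn G (Set.Ico (b - ε) b) := by
    apply monotoneOn_of_deriv_nonneg (convex_Ico _ _)
    · intro k hk
      exact (hGderiv k hk).continuousAt.continuousWithinAt
    · intro k hk
      rw [interior_Ico] at hk
      exact ((hGderiv k (Set.Ioo_subset_Ico_self hk)).differentiableAt).differentiableWithinAt
    · intro k hk
      rw [interior_Ico] at hk
      rw [(hGderiv k (Set.Ioo_subset_Ico_self hk)).deriv]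
      have hkab : k ∈ Set.Ioo a b := ⟨lt_of_lt_of_le hεa hk.1.le, hk.2⟩
      have hγk : 0 < γ k := hpos k hkab
      have hbk : 0 < b - k := by linarith [hk.2]
      have hle : γ k ≤ db * (b - k) := hlin k hk
      have : (db * (b - k))⁻¹ ≤ (γ k)⁻¹ := inv_anti₀ hγk hle
      rw [mul_inv] at this
      have hdb' : (db)⁻¹ = 1 / db := (one_div db).symm
      simp only [hg, sub_nonneg]
      calc (1 / db) * (b - k)⁻¹ = db⁻¹ * (b - k)⁻¹ := by rw [one_div]
        _ ≤ (γ k)⁻¹ := this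
  set C₀ : ℝ := G (b - ε) with hC₀
  set cε : ℝ := Real.exp C₀ * γ k₀ ^ ((1 : ℝ) / 2) * db ^ (-(1 / 2 : ℝ)) with hcε
  have hγk₀ : 0 < γ k₀ := hpos k₀ hk₀
  have hcεpos : 0 < cε := by
    apply mul_pos (mul_pos (Real.exp_pos _) _)
    · exact Real.rpow_pos_of_pos hdb _
    · exact Real.rpow_pos_of_pos hγk₀ _
  -- the main pointwise lower bound
  have hbound : ∀ k ∈ Set.Ioo (b - ε) b, cε * (b - k) ^ (-(1 / 2 : ℝ) - 1 / db) ≤ u k := by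
    intro k hk
    have hkab : k ∈ Set.Ioo a b := ⟨lt_of_lt_of_le hεa hk.1.le, hk.2⟩
    have hγk : 0 < γ k := hpos k hkab
    have hbk : 0 < b - k := by linarith [hk.2]
    have hle : γ k ≤ db * (b - k) := hlin k hk
    -- bound on the exponential factor
    have hGle : G (b - ε) ≤ G k :=
      hGmono ⟨le_refl _, by linarith⟩ ⟨hk.1.le, hk.2⟩ hk.1.le
    have h1 : Real.exp C₀ * (b - k) ^ (-(1 / db)) ≤ Real.exp (∫ r in k₀..k, g r) := by
      rw [Real.rpow_def_of_pos hbk, ← Real.exp_add]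
      apply Real.exp_le_exp.2
      have hGk : G k = (∫ r in k₀..k, g r) + (1 / db) * Real.log (b - k) := rfl
      rw [hGk] at hGle
      have : Real.log (b - k) * (-(1 / db)) = -((1 / db) * Real.log (b - k)) := by ring
      linarith [hGle, this.le, this.ge]
    -- bound on the power factor
    have h2 : db ^ (-(1 / 2 : ℝ)) * (b - k) ^ (-(1 / 2 : ℝ)) ≤ γ k ^ (-(1 / 2 : ℝ)) := by
      rw [← Real.mul_rpow hdb.le hbk.le]
      exact Real.rpow_le_rpow_of_nonpos hγk hle (by norm_num)
    have hsplit : (b - k) ^ (-(1 / 2 : ℝ) - 1 / db)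
        = (b - k) ^ (-(1 / db)) * (b - k) ^ (-(1 / 2 : ℝ)) := by
      rw [← Real.rpow_add hbk]
      congr 1
      ring
    rw [key k hkab, hcε, hsplit]
    calc Real.exp C₀ * γ k₀ ^ ((1 : ℝ) / 2) * db ^ (-(1 / 2 : ℝ))
          * ((b - k) ^ (-(1 / db)) * (b - k) ^ (-(1 / 2 : ℝ)))
        = (Real.exp C₀ * (b - k) ^ (-(1 / db))) * γ k₀ ^ ((1 : ℝ) / 2)
          * (db ^ (-(1 / 2 : ℝ)) * (b - k) ^ (-(1 / 2 : ℝ))) := by ring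
      _ ≤ Real.exp (∫ r in k₀..k, g r) * γ k₀ ^ ((1 : ℝ) / 2) * γ k ^ (-(1 / 2 : ℝ)) := by
          have hA : 0 ≤ Real.exp C₀ * (b - k) ^ (-(1 / db)) := by positivity
          have hB : 0 ≤ γ k₀ ^ ((1 : ℝ) / 2) := by positivity
          have hC : 0 ≤ db ^ (-(1 / 2 : ℝ)) * (b - k) ^ (-(1 / 2 : ℝ)) := by positivity
          gcongr
  refine ⟨cε, hcεpos, hbound, ?_⟩
  intro hInt
  set s : ℝ := 2 * (-(1 / 2) - 1 / db) with hs
  have hεb : b - ε < b := by linarith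
  have h1 : IntegrableOn (fun k => (u k) ^ 2) (Set.Ioo (b - ε) b) :=
    hInt.mono_set (Set.Ioo_subset_Ioo hεa.le le_rfl)
  have h2 : IntegrableOn (fun k => cε ^ 2 * (b - k) ^ s) (Set.Ioo (b - ε) b) := by
    apply Integrable.mono' h1
    · apply ContinuousOn.aestronglyMeasurable _ measurableSet_Ioo
      apply ContinuousOn.mul continuousOn_const
      apply ContinuousOn.rpow_const (continuous_const.sub continuous_id).continuousOn
      intro k hk
      left
      have : (0:ℝ) < b - k := by linarith [hk.2]
      exact this.ne'
    · rw [ae_restrict_iff' measurableSet_Ioo]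
      filter_upwards with k
      intro hk
      have hbk : (0:ℝ) < b - k := by linarith [hk.2]
      have hnn : 0 ≤ cε ^ 2 * (b - k) ^ s := by positivity
      rw [Real.norm_of_nonneg hnn]
      have hsq : (cε * (b - k) ^ (-(1 / 2 : ℝ) - 1 / db)) ^ 2
          = cε ^ 2 * (b - k) ^ s := by
        rw [mul_pow, ← Real.rpow_natCast ((b - k) ^ (-(1 / 2 : ℝ) - 1 / db)) 2,
          ← Real.rpow_mul hbk.le]
        congr 1
        rw [hs]
        push_cast
        ring
      rw [← hsq]
      have hb0 : 0 ≤ cε * (b - k) ^ (-(1 / 2 : ℝ) - 1 / db) := by positivity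
      exact pow_le_pow_left₀ hb0 (hbound k hk) 2
  have h3 : IntegrableOn (fun k => (b - k) ^ s) (Set.Ioo (b - ε) b) := by
    have := h2.const_mul ((cε ^ 2)⁻¹)
    have hne : cε ^ 2 ≠ 0 := by positivity
    simp [← mul_assoc, inv_mul_cancel₀ hne] at this
    exact this
  have h4 : IntervalIntegrable (fun k => (b - k) ^ s) volume (b - ε) b := by
    rw [intervalIntegrable_iff_integrableOn_Ioo_of_le hεb.le]
    exact h3
  have h5 := (h4.comp_sub_left b).symm
  have h6 : IntervalIntegrable (fun x : ℝ => x ^ s) volume 0 ε := by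
    have : (fun x : ℝ => (b - (b - x)) ^ s) = fun x : ℝ => x ^ s := by
      funext x; congr 1; ring
    rw [this] at h5
    simpa using h5
  have h7 : IntegrableOn (fun x : ℝ => x ^ s) (Set.Ioo 0 ε) := by
    rwa [intervalIntegrable_iff_integrableOn_Ioo_of_le hε.le] at h6
  have h8 : -1 < s := (intervalIntegral.integrableOn_Ioo_rpow_iff hε).mp h7
  have : 0 < 1 / db := by positivity
  rw [hs] at h8
  linarith
end

section
/- Let H be a Hilbert space, I an open interval, and for k ∈ I let ψ₁(k), …, ψ_q(k) ∈ H be C¹ functions with ⟨ψ_i(k), ψ_j(k)⟩ = δ_{ij}. Suppose a family of symmetric operators h(k) = h₀ + 2kT + k² satisfies h(k)ψ_j(k) = E(k)ψ_j(k) for a C¹ function E with all ψ_j(k) in the domain. Then 2⟨(T + k)ψ_j(k), ψ_i(k)⟩ = E'(k) δ_{ij} for all i, j and k ∈ I. -/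
open scoped InnerProductSpace

/-- Degenerate Feynman–Hellmann identity: for a `C¹` orthonormal family of eigenvectors
`ψ₁(k),…,ψ_q(k)` of `h(k) = h₀ + 2kT + k²` with common eigenvalue `E(k)`, one has
`2⟨(T+k)ψ_j(k), ψ_i(k)⟩ = E'(k) δ_{ij}`. -/
theorem stmt_15 {H : Type*} [NormedAddCommGroup H] [InnerProductSpace ℝ H]
    (q : ℕ) (I : Set ℝ) (hI : IsOpen I)
    (h₀ T : H →L[ℝ] H)
    (hsymT : ∀ x y, ⟪T x, y⟫_ℝ = ⟪x, T y⟫_ℝ)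
    (hsym0 : ∀ x y, ⟪h₀ x, y⟫_ℝ = ⟪x, h₀ y⟫_ℝ)
    (h : ℝ → H →L[ℝ] H)
    (hh : ∀ k, h k = h₀ + (2 * k) • T + (k ^ 2) • ContinuousLinearMap.id ℝ H)
    (E E' : ℝ → ℝ) (ψ ψ' : ℝ → Fin q → H)
    (hψ : ∀ j, ∀ k ∈ I, HasDerivAt (fun x => ψ x j) (ψ' k j) k)
    (hE : ∀ k ∈ I, HasDerivAt E (E' k) k)
    (horth : ∀ k ∈ I, ∀ i j, ⟪ψ k i, ψ k j⟫_ℝ = if i = j then 1 else 0)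
    (heig : ∀ k ∈ I, ∀ j, h k (ψ k j) = E k • ψ k j) :
    ∀ k ∈ I, ∀ i j,
      2 * ⟪T (ψ k j) + k • ψ k j, ψ k i⟫_ℝ = E' k * (if i = j then 1 else 0) := by
  intro k hk i j
  have hψj := hψ j k hk
  have hψi := hψ i k hk
  -- the function F x = h x (ψ x j) written explicitly
  have hF : HasDerivAt (fun x => h₀ (ψ x j) + (2 * x) • T (ψ x j) + (x ^ 2) • ψ x j)
      ((h₀ (ψ' k j)) + ((2 * k) • T (ψ' k j) + (2 : ℝ) • T (ψ k j))
        + ((k ^ 2) • ψ' k j + (2 * k) • ψ k j)) k := by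
    have := (((h₀.hasFDerivAt.comp_hasDerivAt k hψj)).add
      (((hasDerivAt_id k).const_mul (2:ℝ)).smul (T.hasFDerivAt.comp_hasDerivAt k hψj))).add
      ((hasDerivAt_pow 2 k).smul hψj)
    simp only [Function.comp, id] at this
    convert this using 2 <;> norm_num
  have hf := hF.inner ℝ hψi
  have hg : HasDerivAt (fun x => E x * ⟪ψ x j, ψ x i⟫_ℝ)
      (E' k * ⟪ψ k j, ψ k i⟫_ℝ + E k * (⟪ψ k j, ψ' k i⟫_ℝ + ⟪ψ' k j, ψ k i⟫_ℝ)) k :=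
    (hE k hk).mul (hψj.inner ℝ hψi)
  have heq : (fun x => E x * ⟪ψ x j, ψ x i⟫_ℝ) =ᶠ[nhds k]
      (fun x => ⟪h₀ (ψ x j) + (2 * x) • T (ψ x j) + (x ^ 2) • ψ x j, ψ x i⟫_ℝ) := by
    filter_upwards [hI.mem_nhds hk] with x hx
    have := heig x hx j
    rw [hh x] at this
    simp only [ContinuousLinearMap.add_apply, ContinuousLinearMap.smul_apply,
      ContinuousLinearMap.id_apply] at this
    rw [this, real_inner_smul_left]
  have hg' : HasDerivAt (fun x => ⟪h₀ (ψ x j) + (2 * x) • T (ψ x j) + (x ^ 2) • ψ x j, ψ x i⟫_ℝ)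
      (E' k * ⟪ψ k j, ψ k i⟫_ℝ + E k * (⟪ψ k j, ψ' k i⟫_ℝ + ⟪ψ' k j, ψ k i⟫_ℝ)) k :=
    hg.congr_of_eventuallyEq heq.symm
  have key := hf.unique hg'
  -- eigen relation at k, expanded
  have heigk : h₀ (ψ k j) + (2 * k) • T (ψ k j) + (k ^ 2) • ψ k j = E k • ψ k j := by
    have := heig k hk j
    rw [hh k] at this
    simpa using this
  have heigki : h₀ (ψ k i) + (2 * k) • T (ψ k i) + (k ^ 2) • ψ k i = E k • ψ k i := by
    have := heig k hk i
    rw [hh k] at this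
    simpa using this
  -- symmetric/eigen consequences
  have h1 : ⟪h₀ (ψ' k j), ψ k i⟫_ℝ + (2*k) * ⟪T (ψ' k j), ψ k i⟫_ℝ + k^2 * ⟪ψ' k j, ψ k i⟫_ℝ
      = E k * ⟪ψ' k j, ψ k i⟫_ℝ := by
    rw [hsym0, hsymT]
    calc ⟪ψ' k j, h₀ (ψ k i)⟫_ℝ + 2*k * ⟪ψ' k j, T (ψ k i)⟫_ℝ + k^2 * ⟪ψ' k j, ψ k i⟫_ℝ
        = ⟪ψ' k j, h₀ (ψ k i) + (2*k) • T (ψ k i) + (k^2) • ψ k i⟫_ℝ := by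
          simp [inner_add_right, real_inner_smul_right]
      _ = E k * ⟪ψ' k j, ψ k i⟫_ℝ := by rw [heigki, real_inner_smul_right]
  have h2 : ⟪h₀ (ψ k j) + (2 * k) • T (ψ k j) + (k ^ 2) • ψ k j, ψ' k i⟫_ℝ
      = E k * ⟪ψ k j, ψ' k i⟫_ℝ := by
    rw [heigk, real_inner_smul_left]
  rw [horth k hk j i] at key
  simp only [inner_add_left, real_inner_smul_left, h2] at key
  have horthji : ⟪ψ k j, ψ k i⟫_ℝ = if i = j then 1 else 0 := by
    rw [real_inner_comm, horth k hk i j]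
  rw [inner_add_left, real_inner_smul_left, horth k hk j i]
  have hji : (if j = i then (1:ℝ) else 0) = if i = j then 1 else 0 := by
    by_cases hij : i = j <;> simp [hij, Ne.symm, eq_comm]
  rw [hji] at key ⊢
  rw [horthji] at key
  linarith [key, h1]
end

section
/- Let H be a Hilbert space, λ, μ : I → ℝ and ψ_λ, ψ_μ : I → H be C¹ on an open interval I with ⟨ψ_λ(k), ψ_μ(k)⟩ = 0, ‖ψ_λ(k)‖ = ‖ψ_μ(k)‖ = 1, and h(k)ψ_λ(k) = λ(k)ψ_λ(k), h(k)ψ_μ(k) = μ(k)ψ_μ(k) for a symmetric family h(k) = h₀ + 2kT + k². Then 2⟨(T + k)ψ_λ(k), ψ_μ(k)⟩ = (λ(k) − μ(k)) ⟨∂_k ψ_λ(k), ψ_μ(k)⟩ for all k ∈ I. -/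
open scoped InnerProductSpace

/-- Off-diagonal Feynman–Hellmann identity: for two orthonormal `C¹` eigenvector branches
`ψ_λ, ψ_μ` of `h(k) = h₀ + 2kT + k²` with eigenvalues `λ(k), μ(k)`, one has
`2⟨(T+k)ψ_λ(k), ψ_μ(k)⟩ = (λ(k) - μ(k)) ⟨∂_kψ_λ(k), ψ_μ(k)⟩`. -/
theorem stmt_16 {H : Type*} [NormedAddCommGroup H] [InnerProductSpace ℝ H]
    (I : Set ℝ) (hI : IsOpen I)
    (h₀ T : H →L[ℝ] H)
    (hsymT : ∀ x y, ⟪T x, y⟫_ℝ = ⟪x, T y⟫_ℝ)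
    (hsym0 : ∀ x y, ⟪h₀ x, y⟫_ℝ = ⟪x, h₀ y⟫_ℝ)
    (h : ℝ → H →L[ℝ] H)
    (hh : ∀ k, h k = h₀ + (2 * k) • T + (k ^ 2) • ContinuousLinearMap.id ℝ H)
    (lam mu : ℝ → ℝ) (ψlam ψmu ψlam' ψmu' : ℝ → H)
    (hψlam : ∀ k ∈ I, HasDerivAt ψlam (ψlam' k) k)
    (hψmu : ∀ k ∈ I, HasDerivAt ψmu (ψmu' k) k)
    (horth : ∀ k ∈ I, ⟪ψlam k, ψmu k⟫_ℝ = 0)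
    (hnlam : ∀ k ∈ I, ‖ψlam k‖ = 1) (hnmu : ∀ k ∈ I, ‖ψmu k‖ = 1)
    (heiglam : ∀ k ∈ I, h k (ψlam k) = lam k • ψlam k)
    (heigmu : ∀ k ∈ I, h k (ψmu k) = mu k • ψmu k) :
    ∀ k ∈ I, 2 * ⟪T (ψlam k) + k • ψlam k, ψmu k⟫_ℝ =
      (lam k - mu k) * ⟪ψlam' k, ψmu k⟫_ℝ := by
  intro k hk
  have hmem : I ∈ nhds k := hI.mem_nhds hk
  -- symmetry of h k
  have hsym : ∀ x y, ⟪(h k) x, y⟫_ℝ = ⟪x, (h k) y⟫_ℝ := by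
    intro x y
    rw [hh]
    simp [inner_add_left, inner_add_right, inner_smul_left, inner_smul_right,
      hsymT, hsym0]
  -- derivative of orthogonality relation
  have hd1 : HasDerivAt (fun t => ⟪ψlam t, ψmu t⟫_ℝ)
      (⟪ψlam k, ψmu' k⟫_ℝ + ⟪ψlam' k, ψmu k⟫_ℝ) k :=
    (hψlam k hk).inner ℝ (hψmu k hk)
  have hz1 : (fun t => ⟪ψlam t, ψmu t⟫_ℝ) =ᶠ[nhds k] fun _ => (0:ℝ) := by
    filter_upwards [hmem] with t ht using horth t ht
  have horthd : ⟪ψlam k, ψmu' k⟫_ℝ + ⟪ψlam' k, ψmu k⟫_ℝ = 0 := by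
    have := (hd1.congr_of_eventuallyEq hz1.symm).unique (hasDerivAt_const k (0:ℝ))
    linarith [this]
  -- derivative of ⟪h t (ψlam t), ψmu t⟫
  have hL : HasDerivAt (fun t => (h t) (ψlam t))
      ((h k) (ψlam' k) + (2:ℝ) • T (ψlam k) + (2*k) • ψlam k) k := by
    have e : (fun t => (h t) (ψlam t)) =
        fun t => h₀ (ψlam t) + (2*t) • T (ψlam t) + t^2 • ψlam t := by
      funext t; rw [hh]; simp
    rw [e]
    have d0 : HasDerivAt (fun t => h₀ (ψlam t)) (h₀ (ψlam' k)) k :=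
      h₀.hasFDerivAt.comp_hasDerivAt k (hψlam k hk)
    have dT : HasDerivAt (fun t => T (ψlam t)) (T (ψlam' k)) k :=
      T.hasFDerivAt.comp_hasDerivAt k (hψlam k hk)
    have d1 : HasDerivAt (fun t : ℝ => (2*t) • T (ψlam t))
        ((2*k) • T (ψlam' k) + (2:ℝ) • T (ψlam k)) k := by
      have := ((hasDerivAt_id k).const_mul 2).smul dT
      simpa [two_smul, add_comm, Pi.smul_def'] using this
    have d2 : HasDerivAt (fun t : ℝ => t^2 • ψlam t)
        ((k^2) • ψlam' k + (2*k) • ψlam k) k := by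
      have hp : HasDerivAt (fun t : ℝ => t^2) (2*k) k := by
        simpa using (hasDerivAt_pow 2 k)
      have := hp.smul (hψlam k hk)
      simpa [add_comm, Pi.smul_def'] using this
    have := (d0.add d1).add d2
    have heq : h₀ (ψlam' k) + ((2*k) • T (ψlam' k) + (2:ℝ) • T (ψlam k)) +
        ((k^2) • ψlam' k + (2*k) • ψlam k)
        = (h k) (ψlam' k) + (2:ℝ) • T (ψlam k) + (2*k) • ψlam k := by
      rw [hh]; simp; abel
    rwa [heq] at this
  have hd2 : HasDerivAt (fun t => ⟪(h t) (ψlam t), ψmu t⟫_ℝ)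
      (⟪(h k) (ψlam k), ψmu' k⟫_ℝ +
        ⟪(h k) (ψlam' k) + (2:ℝ) • T (ψlam k) + (2*k) • ψlam k, ψmu k⟫_ℝ) k :=
    hL.inner ℝ (hψmu k hk)
  have hz2 : (fun t => ⟪(h t) (ψlam t), ψmu t⟫_ℝ) =ᶠ[nhds k] fun _ => (0:ℝ) := by
    filter_upwards [hmem] with t ht
    rw [heiglam t ht, inner_smul_left]
    simp [horth t ht]
  have hmain : ⟪(h k) (ψlam k), ψmu' k⟫_ℝ +
      ⟪(h k) (ψlam' k) + (2:ℝ) • T (ψlam k) + (2*k) • ψlam k, ψmu k⟫_ℝ = 0 :=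
    (hd2.congr_of_eventuallyEq hz2.symm).unique (hasDerivAt_const k (0:ℝ))
  -- simplify terms
  have t1 : ⟪(h k) (ψlam k), ψmu' k⟫_ℝ = lam k * ⟪ψlam k, ψmu' k⟫_ℝ := by
    rw [heiglam k hk, real_inner_smul_left]
  have t2 : ⟪(h k) (ψlam' k), ψmu k⟫_ℝ = mu k * ⟪ψlam' k, ψmu k⟫_ℝ := by
    rw [hsym, heigmu k hk, real_inner_smul_right]
  rw [inner_add_left, inner_add_left, t1, t2, real_inner_smul_left,
    real_inner_smul_left, horth k hk] at hmain
  have hsub : ⟪ψlam k, ψmu' k⟫_ℝ = -⟪ψlam' k, ψmu k⟫_ℝ := by linarith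
  rw [hsub] at hmain
  rw [inner_add_left, real_inner_smul_left, horth k hk]
  linear_combination hmain
end
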